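/- arXiv:2106.00939 — 4 statements merged into one kernel-verified Lean document; each statement's English description precedes it below -/
import Mathlib

section
/- If the covariate density f is identifiable (known) and β ≠ 0, then the intercept α is identifiable: if ∫ φ(α+βᵀx) f(x) dx determines f₁(x) = φ(α+βᵀx)f(x)/c and two intercepts α ≠ α' with the same slope β and same density f produce the same case density f₁, then α = α'. Equivalently, the map α ↦ f₁ is injective for fixed β and f with f positive on a set of positive measure where βᵀx takes at least two distinct values. -/
open Real Matrix MeasureTheory

/-- The logistic function φ(t) = eᵗ/(1+eᵗ). -/
noncomputable def phi (t : ℝ) : ℝ := Real.exp t / (1 + Real.exp t)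

/-! Since `1 / φ(s) = 1 + e^{-s}`, equality of the two case densities at a point `x` with
`f x ≠ 0` says that the affine functions `u ↦ c(α) + c(α) e^{-α} u` and
`u ↦ c(α') + c(α') e^{-α'} u` agree at `u = e^{-βᵀx}`. Two distinct values of `βᵀx` give two
distinct such `u`, so the functions coincide: `c(α) = c(α')` and then `e^{-α} = e^{-α'}`. -/

theorem phi_pos (t : ℝ) : 0 < phi t := by
  unfold phi
  positivity

theorem inv_phi (t : ℝ) : (phi t)⁻¹ = 1 + exp (-t) := by
  rw [phi, inv_div, exp_neg]
  field_simp
  ring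

theorem eq_and_eq_of_add_mul_eq_add_mul {K : Type*} [Field K] {a b a' b' u₁ u₂ : K}
    (h₁ : a + b * u₁ = a' + b' * u₁) (h₂ : a + b * u₂ = a' + b' * u₂) (hu : u₁ ≠ u₂) :
    a = a' ∧ b = b' := by
  have hb : b = b' := by
    have h : (b - b') * (u₁ - u₂) = 0 := by linear_combination h₁ - h₂
    simpa [sub_eq_zero, hu] using h
  subst hb
  exact ⟨by simpa using h₁, rfl⟩

theorem add_mul_exp_neg_eq_of_phi_mul_div_eq {a a' t y c c' : ℝ} (hy : y ≠ 0)
    (hc : c ≠ 0) (hc' : c' ≠ 0) (h : phi (a + t) * y / c = phi (a' + t) * y / c') :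
    c + c * exp (-a) * exp (-t) = c' + c' * exp (-a') * exp (-t) := by
  have hp := (phi_pos (a + t)).ne'
  have hp' := (phi_pos (a' + t)).ne'
  have hdiv : c * (phi (a + t))⁻¹ = c' * (phi (a' + t))⁻¹ := by
    field_simp at h ⊢
    linear_combination -h
  simp only [inv_phi, neg_add, exp_add] at hdiv
  linear_combination hdiv

theorem intercept_identifiable_known_density_general {d : ℕ}
    (α α' : ℝ) (β : Fin d → ℝ) (f : (Fin d → ℝ) → ℝ)
    (cα cα' : ℝ)
    (hcα01 : 0 < cα ∧ cα < 1) (hcα'01 : 0 < cα' ∧ cα' < 1)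
    (x₁ x₂ : Fin d → ℝ) (hx₁ : 0 < f x₁) (hx₂ : 0 < f x₂)
    (hsep : β ⬝ᵥ x₁ ≠ β ⬝ᵥ x₂)
    (heq : ∀ x, phi (α + β ⬝ᵥ x) * f x / cα = phi (α' + β ⬝ᵥ x) * f x / cα') :
    α = α' := by
  have hc := hcα01.1.ne'
  have hc' := hcα'01.1.ne'
  have hu : exp (-(β ⬝ᵥ x₁)) ≠ exp (-(β ⬝ᵥ x₂)) :=
    fun h => hsep (neg_inj.mp (exp_injective h))
  obtain ⟨hcc, hslope⟩ := eq_and_eq_of_add_mul_eq_add_mul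
    (add_mul_exp_neg_eq_of_phi_mul_div_eq hx₁.ne' hc hc' (heq x₁))
    (add_mul_exp_neg_eq_of_phi_mul_div_eq hx₂.ne' hc hc' (heq x₂)) hu
  rw [hcc, mul_right_inj' hc'] at hslope
  exact neg_inj.mp (exp_injective hslope)

/-- If the covariate density f is known and β ≠ 0 (witnessed by two support
points where βᵀx takes distinct values), then the intercept is identifiable:
two intercepts producing the same case density f₁(x) = φ(α+βᵀx)f(x)/c(α)
must coincide. -/
theorem intercept_identifiable_known_density {d : ℕ}
    (α α' : ℝ) (β : Fin d → ℝ) (f : (Fin d → ℝ) → ℝ)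
    (cα cα' : ℝ)
    (hcα : cα = ∫ x, phi (α + β ⬝ᵥ x) * f x)
    (hcα' : cα' = ∫ x, phi (α' + β ⬝ᵥ x) * f x)
    (hcα01 : 0 < cα ∧ cα < 1) (hcα'01 : 0 < cα' ∧ cα' < 1)
    (x₁ x₂ : Fin d → ℝ) (hx₁ : 0 < f x₁) (hx₂ : 0 < f x₂)
    (hsep : β ⬝ᵥ x₁ ≠ β ⬝ᵥ x₂)
    (heq : ∀ x, phi (α + β ⬝ᵥ x) * f x / cα = phi (α' + β ⬝ᵥ x) * f x / cα') :
    α = α' :=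
  intercept_identifiable_known_density_general α α' β f cα cα' hcα01 hcα'01 x₁ x₂ hx₁ hx₂ hsep heq
end

section
/- Identifiability of the slope: if two logistic case-control parametrizations (α,β,f) and (α',β',f') with positive continuous densities induce the same case density f₁ and control density f₀, then β = β'. -/
open Real Matrix MeasureTheory

/-- Identifiability of the slope: if two logistic case-control parametrizations
(α,β,f) and (α',β',f') with positive densities (covariate distribution not
concentrated on a hyperplane) induce the same case and control densities, then
β = β'. -/
theorem slope_identifiable {d : ℕ}
    (α α' : ℝ) (β β' : Fin d → ℝ) (f f' : (Fin d → ℝ) → ℝ)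
    (hf_pos : ∀ x, 0 < f x) (hf'_pos : ∀ x, 0 < f' x)
    (hf_cont : Continuous f) (hf'_cont : Continuous f')
    (c c' : ℝ)
    (hc : c = ∫ x, phi (α + β ⬝ᵥ x) * f x)
    (hc' : c' = ∫ x, phi (α' + β' ⬝ᵥ x) * f' x)
    (hc01 : 0 < c ∧ c < 1) (hc'01 : 0 < c' ∧ c' < 1)
    (hnondeg : ∀ (a : ℝ) (u : Fin d → ℝ), (∀ x, a + u ⬝ᵥ x = 0) → a = 0 ∧ u = 0)
    (heq₁ : ∀ x, phi (α + β ⬝ᵥ x) * f x / c = phi (α' + β' ⬝ᵥ x) * f' x / c')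
    (heq₀ : ∀ x, (1 - phi (α + β ⬝ᵥ x)) * f x / (1 - c)
        = (1 - phi (α' + β' ⬝ᵥ x)) * f' x / (1 - c')) :
    β = β' := by
  obtain ⟨hc0, hc1⟩ := hc01
  obtain ⟨hc'0, hc'1⟩ := hc'01
  have h1c : (0:ℝ) < 1 - c := by linarith
  have h1c' : (0:ℝ) < 1 - c' := by linarith
  have key : ∀ x, Real.exp (α + β ⬝ᵥ x) * (c' * (1 - c))
      = Real.exp (α' + β' ⬝ᵥ x) * (c * (1 - c')) := by
    intro x
    set t := α + β ⬝ᵥ x with ht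
    set s := α' + β' ⬝ᵥ x with hs
    have het : (0:ℝ) < 1 + Real.exp t := by positivity
    have hes : (0:ℝ) < 1 + Real.exp s := by positivity
    have e1 : phi t * f x * c' = phi s * f' x * c :=
      (div_eq_div_iff hc0.ne' hc'0.ne').mp (heq₁ x)
    have e0 : (1 - phi t) * f x * (1 - c') = (1 - phi s) * f' x * (1 - c) :=
      (div_eq_div_iff h1c.ne' h1c'.ne').mp (heq₀ x)
    have e2 : (phi t * f x * c') * ((1 - phi s) * f' x * (1 - c))
        = (phi s * f' x * c) * ((1 - phi t) * f x * (1 - c')) := by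
      rw [e1, ← e0]
    have e3 : phi t * (1 - phi s) * (c' * (1 - c))
        = phi s * (1 - phi t) * (c * (1 - c')) := by
      have hff : f x * f' x ≠ 0 := mul_ne_zero (hf_pos x).ne' (hf'_pos x).ne'
      apply mul_right_cancel₀ hff
      linear_combination e2
    simp only [phi] at e3
    field_simp at e3
    nlinarith [e3, mul_pos het hes]
  have keylog : ∀ x, (α + β ⬝ᵥ x) + Real.log (c' * (1 - c))
      = (α' + β' ⬝ᵥ x) + Real.log (c * (1 - c')) := by
    intro x
    have h1 : (0:ℝ) < c' * (1 - c) := mul_pos hc'0 h1c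
    have h2 : (0:ℝ) < c * (1 - c') := mul_pos hc0 h1c'
    have := congrArg Real.log (key x)
    rwa [Real.log_mul (Real.exp_pos _).ne' h1.ne',
      Real.log_mul (Real.exp_pos _).ne' h2.ne', Real.log_exp, Real.log_exp] at this
  have hzero : ∀ x, (α - α' + Real.log (c' * (1 - c)) - Real.log (c * (1 - c')))
      + (β - β') ⬝ᵥ x = 0 := by
    intro x
    have h := keylog x
    have hsub : (β - β') ⬝ᵥ x = β ⬝ᵥ x - β' ⬝ᵥ x := sub_dotProduct β β' x
    rw [hsub]
    linarith
  have := (hnondeg _ _ hzero).2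
  exact sub_eq_zero.mp this
end

section
/- In the Lagrangian maximization of the combined case-control profile likelihood, the Lagrange multiplier vanishes: if p_{ik} > 0 satisfy the first-order condition 1/p_{ik} = Σ_{t=1}^K [n_{t1}/c̃_t · φ_t(x_{ik}) + n_{t0}/(1-c̃_t) · (1-φ_t(x_{ik}))] + λ for all i,k, together with Σ_{i,k} p_{ik} = 1 and c̃_t = Σ_{i,k} φ_t(x_{ik}) p_{ik}, then λ = 0. -/
/-!
Multiplying the first-order condition by `p_{ik}` and summing over all observations turns its
left side into `N`. On the right side, `Σ p_{ik} = 1` makes the multiplier contribute `λ`, and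
each study contributes `n_{t1}/c̃_t · c̃_t + n_{t0}/(1 - c̃_t) · (1 - c̃_t) = n_t` precisely
because `c̃_t = Σ φ_t(x_{ik}) p_{ik}`. Hence `N = N + λ`.
-/

open Finset

section

variable {ι τ : Type*} [Fintype ι] [Fintype τ]

lemma card_eq_sum_mul_add_of_one_div_eq {w g : ι → ℝ} {lam : ℝ} (hw : ∀ j, w j ≠ 0)
    (hsum : ∑ j, w j = 1) (hfoc : ∀ j, 1 / w j = g j + lam) :
    (Fintype.card ι : ℝ) = ∑ j, w j * g j + lam :=
  calc (Fintype.card ι : ℝ) = ∑ j, w j * (1 / w j) := by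
        simp only [mul_one_div_cancel (hw _), sum_const, card_univ, nsmul_eq_mul, mul_one]
    _ = ∑ j, w j * g j + (∑ j, w j) * lam := by
        simp only [hfoc, mul_add, sum_add_distrib, sum_mul]
    _ = ∑ j, w j * g j + lam := by rw [hsum, one_mul]

lemma sum_mul_add_mul_one_sub_eq {w φ : ι → ℝ} {c : ℝ} (a b : ℝ)
    (hsum : ∑ j, w j = 1) (hc : c = ∑ j, φ j * w j) (hc0 : c ≠ 0) (hc1 : c ≠ 1) :
    ∑ j, w j * (a / c * φ j + b / (1 - c) * (1 - φ j)) = a + b := by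
  have hc1' : 1 - c ≠ 0 := sub_ne_zero.mpr hc1.symm
  calc ∑ j, w j * (a / c * φ j + b / (1 - c) * (1 - φ j))
      = a / c * ∑ j, φ j * w j + b / (1 - c) * (∑ j, w j - ∑ j, φ j * w j) := by
        simp only [mul_sum, ← sum_sub_distrib, ← sum_add_distrib]
        exact sum_congr rfl fun j _ => by ring
    _ = a + b := by rw [← hc, hsum]; field_simp

lemma sum_mul_sum_eq_sum_add {w : ι → ℝ} {φ : τ → ι → ℝ} {c : τ → ℝ} (a b : τ → ℝ)
    (hsum : ∑ j, w j = 1) (hc : ∀ t, c t = ∑ j, φ t j * w j)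
    (hc0 : ∀ t, c t ≠ 0) (hc1 : ∀ t, c t ≠ 1) :
    ∑ j, w j * ∑ t, (a t / c t * φ t j + b t / (1 - c t) * (1 - φ t j)) =
      ∑ t, (a t + b t) := by
  simp only [mul_sum]
  rw [sum_comm]
  exact sum_congr rfl fun t _ =>
    sum_mul_add_mul_one_sub_eq (a t) (b t) hsum (hc t) (hc0 t) (hc1 t)

end

theorem lagrange_multiplier_zero_general (K : ℕ) (n n1 n0 : Fin K → ℕ)
    (hn : ∀ k, n k = n1 k + n0 k)
    (φf : Fin K → (k : Fin K) → Fin (n k) → ℝ)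
    (p : (k : Fin K) → Fin (n k) → ℝ) (hp : ∀ k i, 0 < p k i)
    (hpsum : ∑ k, ∑ i, p k i = 1)
    (ct : Fin K → ℝ)
    (hct : ∀ t, ct t = ∑ k, ∑ i, φf t k i * p k i)
    (hct01 : ∀ t, 0 < ct t ∧ ct t < 1)
    (lam : ℝ)
    (hfoc : ∀ k i, 1 / p k i =
      (∑ t, ((n1 t : ℝ) / ct t * φf t k i
        + (n0 t : ℝ) / (1 - ct t) * (1 - φf t k i))) + lam) :
    lam = 0 := by
  let w : (Σ k, Fin (n k)) → ℝ := fun x => p x.1 x.2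
  have hwsum : ∑ x, w x = 1 := by rw [Fintype.sum_sigma]; exact hpsum
  have hN := card_eq_sum_mul_add_of_one_div_eq (w := w) (fun x => (hp x.1 x.2).ne') hwsum
    fun x => hfoc x.1 x.2
  rw [sum_mul_sum_eq_sum_add (fun t => (n1 t : ℝ)) (fun t => (n0 t : ℝ)) hwsum
    (fun t => (hct t).trans (Fintype.sum_sigma' fun k i => φf t k i * p k i).symm)
    (fun t => (hct01 t).1.ne') (fun t => (hct01 t).2.ne)] at hN
  simp only [Fintype.card_sigma, Fintype.card_fin, hn, Nat.cast_sum, Nat.cast_add] at hN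
  linarith

/-- In the Lagrangian maximization of the combined case-control profile
likelihood, the Lagrange multiplier vanishes. -/
theorem lagrange_multiplier_zero (K : ℕ) (n n1 n0 : Fin K → ℕ)
    (hn : ∀ k, n k = n1 k + n0 k)
    (φf : Fin K → (k : Fin K) → Fin (n k) → ℝ)
    (hφ : ∀ t k i, 0 < φf t k i ∧ φf t k i < 1)
    (p : (k : Fin K) → Fin (n k) → ℝ) (hp : ∀ k i, 0 < p k i)
    (hpsum : ∑ k, ∑ i, p k i = 1)
    (ct : Fin K → ℝ)
    (hct : ∀ t, ct t = ∑ k, ∑ i, φf t k i * p k i)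
    (hct01 : ∀ t, 0 < ct t ∧ ct t < 1)
    (lam : ℝ)
    (hfoc : ∀ k i, 1 / p k i =
      (∑ t, ((n1 t : ℝ) / ct t * φf t k i
        + (n0 t : ℝ) / (1 - ct t) * (1 - φf t k i))) + lam) :
    lam = 0 :=
  lagrange_multiplier_zero_general K n n1 n0 hn φf p hp hpsum ct hct hct01 lam hfoc
end

section
/- Non-identifiability under equal parameters (Proposition 1(c) core computation): if α₁ = α₂ = α and β₁ = β₂ = β ≠ 0, then the combined model is observationally equivalent to a single case-control study with parameters (α, β, f), and hence for any α' there exists a density f' making (α', β, f') observationally equivalent, so α is not identifiable. Formally: if (f₁, f₀) denote the common case/control densities of both studies, then the map from (α, f) to (f₁, f₀) with β fixed is not injective in α. -/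
/-! Shifting the intercept of a logistic model by `s` multiplies the odds of every posterior
probability by `eˢ`. If the prior odds `c / (1 - c)` are multiplied by the same factor, the
posterior of the mixture `c' f₁ + (1 - c') f₀` of the case and control densities is again
logistic with the shifted intercept, so this mixture is a covariate density that reproduces
`f₁` and `f₀` under the shifted parameters. -/

open Real Matrix MeasureTheory

lemma phi_eq_sigmoid : phi = sigmoid := by
  ext t
  rw [phi, sigmoid_def, exp_neg]
  field_simp
  ring

namespace Real

noncomputable def logit (p : ℝ) : ℝ := log (p / (1 - p))

lemma sigmoid_logit {p : ℝ} (hp0 : 0 < p) (hp1 : p < 1) : sigmoid (logit p) = p := by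
  have : 0 < 1 - p := sub_pos.mpr hp1
  rw [logit, sigmoid_def, exp_neg, exp_log (by positivity)]
  field_simp
  ring

lemma sigmoid_add_mul_one_sub_sigmoid (s t : ℝ) :
    sigmoid (s + t) * (1 - sigmoid t) = exp s * sigmoid t * (1 - sigmoid (s + t)) := by
  rw [← sigmoid_neg, ← sigmoid_neg, ← sigmoid_mul_rexp_neg, ← sigmoid_mul_rexp_neg, neg_add,
    exp_add, exp_neg s]
  field_simp

end Real

section Pointwise

variable {X : Type*} {p f f₁ f₀ : X → ℝ} {c : ℝ}

lemma case_density_nonneg (hp : ∀ x, 0 ≤ p x) (hf : ∀ x, 0 ≤ f x) (hc : 0 ≤ c)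
    (hf₁ : ∀ x, f₁ x = p x * f x / c) (x : X) : 0 ≤ f₁ x := by
  have := hp x
  have := hf x
  rw [hf₁]
  positivity

lemma control_density_nonneg (hp : ∀ x, p x ≤ 1) (hf : ∀ x, 0 ≤ f x) (hc : c ≤ 1)
    (hf₀ : ∀ x, f₀ x = (1 - p x) * f x / (1 - c)) (x : X) : 0 ≤ f₀ x := by
  have := sub_nonneg.mpr (hp x)
  have := sub_nonneg.mpr hc
  have := hf x
  rw [hf₀]
  positivity

lemma control_density_eq (hf₀ : ∀ x, f₀ x = (1 - p x) * f x / (1 - c)) :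
    f₀ = fun x => (f x - p x * f x) / (1 - c) := by
  ext x
  rw [hf₀ x]
  ring

def mixture (c : ℝ) (f₁ f₀ : X → ℝ) : X → ℝ := fun x => c * f₁ x + (1 - c) * f₀ x

lemma mixture_nonneg (hc0 : 0 ≤ c) (hc1 : c ≤ 1) (h₁ : ∀ x, 0 ≤ f₁ x) (h₀ : ∀ x, 0 ≤ f₀ x)
    (x : X) : 0 ≤ mixture c f₁ f₀ x := by
  have := sub_nonneg.mpr hc1
  have := h₁ x
  have := h₀ x
  unfold mixture
  positivity

lemma one_sub_mul_mixture (hp : ∀ x, p x * mixture c f₁ f₀ x = c * f₁ x) (x : X) :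
    (1 - p x) * mixture c f₁ f₀ x = (1 - c) * f₀ x := by
  rw [sub_mul, hp, mixture]
  ring

lemma sigmoid_add_mul_mixture {t : X → ℝ} {a : ℝ} (a' : ℝ) (hc0 : 0 < c) (hc1 : c < 1)
    (hf₁ : ∀ x, f₁ x = sigmoid (a + t x) * f x / c)
    (hf₀ : ∀ x, f₀ x = (1 - sigmoid (a + t x)) * f x / (1 - c)) (x : X) :
    sigmoid (a' + t x) * mixture (sigmoid (a' - a + logit c)) f₁ f₀ x =
      sigmoid (a' - a + logit c) * f₁ x := by
  have hposterior := sigmoid_add_mul_one_sub_sigmoid (a' - a) (a + t x)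
  have hprior := sigmoid_add_mul_one_sub_sigmoid (a' - a) (logit c)
  rw [show a' - a + (a + t x) = a' + t x by ring] at hposterior
  rw [sigmoid_logit hc0 hc1] at hprior
  have := sub_ne_zero.mpr hc1.ne'
  rw [mixture, hf₁, hf₀]
  field_simp
  linear_combination (f x * c * (1 - sigmoid (a' - a + logit c))) * hposterior -
    (f x * (1 - sigmoid (a' + t x)) * sigmoid (a + t x)) * hprior

end Pointwise

section Integral

variable {X : Type*} [MeasurableSpace X] {μ : Measure X} {p f f₁ f₀ : X → ℝ} {c : ℝ}

lemma integrable_case_density (hpf : Integrable (fun x => p x * f x) μ)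
    (hf₁ : ∀ x, f₁ x = p x * f x / c) : Integrable f₁ μ := by
  rw [funext hf₁]
  exact hpf.div_const c

lemma integral_case_density (hc : c = ∫ x, p x * f x ∂μ) (hc0 : c ≠ 0)
    (hf₁ : ∀ x, f₁ x = p x * f x / c) : ∫ x, f₁ x ∂μ = 1 := by
  rw [funext hf₁, integral_div, ← hc, div_self hc0]

lemma integrable_control_density (hf : Integrable f μ) (hpf : Integrable (fun x => p x * f x) μ)
    (hf₀ : ∀ x, f₀ x = (1 - p x) * f x / (1 - c)) : Integrable f₀ μ := by
  rw [control_density_eq hf₀]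
  exact (hf.sub hpf).div_const _

lemma integral_control_density (hf : Integrable f μ) (hpf : Integrable (fun x => p x * f x) μ)
    (hf_norm : ∫ x, f x ∂μ = 1) (hc : c = ∫ x, p x * f x ∂μ) (hc1 : c ≠ 1)
    (hf₀ : ∀ x, f₀ x = (1 - p x) * f x / (1 - c)) : ∫ x, f₀ x ∂μ = 1 := by
  rw [control_density_eq hf₀, integral_div, integral_sub hf hpf, hf_norm, ← hc,
    div_self (sub_ne_zero.mpr hc1.symm)]

lemma MeasureTheory.Integrable.mixture (h₁ : Integrable f₁ μ) (h₀ : Integrable f₀ μ) :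
    Integrable (mixture c f₁ f₀) μ :=
  (h₁.const_mul c).add (h₀.const_mul (1 - c))

lemma integral_mixture (h₁ : Integrable f₁ μ) (h₀ : Integrable f₀ μ)
    (n₁ : ∫ x, f₁ x ∂μ = 1) (n₀ : ∫ x, f₀ x ∂μ = 1) : ∫ x, mixture c f₁ f₀ x ∂μ = 1 := by
  unfold mixture
  rw [integral_add (h₁.const_mul c) (h₀.const_mul (1 - c)), integral_const_mul,
    integral_const_mul, n₁, n₀]
  ring

lemma integral_mul_mixture (hp : ∀ x, p x * mixture c f₁ f₀ x = c * f₁ x)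
    (n₁ : ∫ x, f₁ x ∂μ = 1) : ∫ x, p x * mixture c f₁ f₀ x ∂μ = c := by
  simp only [hp, integral_const_mul, n₁, mul_one]

end Integral

theorem nonidentifiability_equal_parameters_general {d : ℕ}
    (α : ℝ) (β : Fin d → ℝ)
    (f : (Fin d → ℝ) → ℝ) (hf_pos : ∀ x, 0 < f x)
    (hf_int : Integrable f) (hf_norm : (∫ x, f x) = 1)
    (c : ℝ) (hc : c = ∫ x, phi (α + β ⬝ᵥ x) * f x) (hc0 : 0 < c) (hc1 : c < 1)
    (f₁ f₀ : (Fin d → ℝ) → ℝ)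
    (hf₁ : ∀ x, f₁ x = phi (α + β ⬝ᵥ x) * f x / c)
    (hf₀ : ∀ x, f₀ x = (1 - phi (α + β ⬝ᵥ x)) * f x / (1 - c)) :
    ∀ α' : ℝ, α' ≠ α →
      ∃ (f' : (Fin d → ℝ) → ℝ) (c' : ℝ),
        (∀ x, 0 ≤ f' x) ∧ Integrable f' ∧ (∫ x, f' x) = 1 ∧
        0 < c' ∧ c' < 1 ∧ c' = (∫ x, phi (α' + β ⬝ᵥ x) * f' x) ∧
        (∀ x, f₁ x = phi (α' + β ⬝ᵥ x) * f' x / c') ∧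
        (∀ x, f₀ x = (1 - phi (α' + β ⬝ᵥ x)) * f' x / (1 - c')) := by
  intro α' _
  rw [phi_eq_sigmoid] at hc hf₁ hf₀ ⊢
  set c' := sigmoid (α' - α + logit c)
  have hpf : Integrable (fun x => sigmoid (α + β ⬝ᵥ x) * f x) :=
    hf_int.bdd_mul (c := 1) (by fun_prop : Continuous _).aestronglyMeasurable
      (.of_forall fun x => by rw [norm_of_nonneg (sigmoid_nonneg _)]; exact sigmoid_le_one _)
  have hf₁_nonneg := case_density_nonneg (fun _ => sigmoid_nonneg _) (hf_pos · |>.le) hc0.le hf₁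
  have hf₀_nonneg := control_density_nonneg (fun _ => sigmoid_le_one _) (hf_pos · |>.le) hc1.le hf₀
  have hf₁_int := integrable_case_density hpf hf₁
  have hf₀_int := integrable_control_density hf_int hpf hf₀
  have hpost : ∀ x, sigmoid (α' + β ⬝ᵥ x) * mixture c' f₁ f₀ x = c' * f₁ x :=
    sigmoid_add_mul_mixture α' hc0 hc1 hf₁ hf₀
  have hf₁_norm := integral_case_density hc hc0.ne' hf₁
  have hf₀_norm := integral_control_density hf_int hpf hf_norm hc hc1.ne hf₀
  refine ⟨mixture c' f₁ f₀, c',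
    mixture_nonneg (sigmoid_nonneg _) (sigmoid_le_one _) hf₁_nonneg hf₀_nonneg,
    hf₁_int.mixture hf₀_int, integral_mixture hf₁_int hf₀_int hf₁_norm hf₀_norm,
    sigmoid_pos _, sigmoid_lt_one _, (integral_mul_mixture hpost hf₁_norm).symm,
    fun x => ?_, fun x => ?_⟩
  · rw [hpost, mul_div_cancel_left₀ _ (sigmoid_pos _).ne']
  · rw [one_sub_mul_mixture hpost, mul_div_cancel_left₀ _ (sub_pos.mpr (sigmoid_lt_one _)).ne']

/-- Non-identifiability under equal parameters (Proposition 1(c) core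
computation): when the two studies share the same intercept α and slope β ≠ 0
(so the combined model is observationally equivalent to a single case-control
study with parameters (α, β, f)), the map (α, f) ↦ (f₁, f₀) with β fixed is not
injective in α: for any α' ≠ α there are a density f' and c' ∈ (0,1) making
(α', β, f') observationally equivalent, i.e. producing the same common case and
control densities f₁, f₀ of both studies. -/
theorem nonidentifiability_equal_parameters {d : ℕ}
    (α : ℝ) (β : Fin d → ℝ) (hβ : β ≠ 0)
    (f : (Fin d → ℝ) → ℝ) (hf_cont : Continuous f) (hf_pos : ∀ x, 0 < f x)
    (hf_int : Integrable f) (hf_norm : (∫ x, f x) = 1)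
    (c : ℝ) (hc : c = ∫ x, phi (α + β ⬝ᵥ x) * f x) (hc0 : 0 < c) (hc1 : c < 1)
    (f₁ f₀ : (Fin d → ℝ) → ℝ)
    (hf₁ : ∀ x, f₁ x = phi (α + β ⬝ᵥ x) * f x / c)
    (hf₀ : ∀ x, f₀ x = (1 - phi (α + β ⬝ᵥ x)) * f x / (1 - c)) :
    ∀ α' : ℝ, α' ≠ α →
      ∃ (f' : (Fin d → ℝ) → ℝ) (c' : ℝ),
        (∀ x, 0 ≤ f' x) ∧ Integrable f' ∧ (∫ x, f' x) = 1 ∧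
        0 < c' ∧ c' < 1 ∧ c' = (∫ x, phi (α' + β ⬝ᵥ x) * f' x) ∧
        (∀ x, f₁ x = phi (α' + β ⬝ᵥ x) * f' x / c') ∧
        (∀ x, f₀ x = (1 - phi (α' + β ⬝ᵥ x)) * f' x / (1 - c')) :=
  nonidentifiability_equal_parameters_general α β f hf_pos hf_int hf_norm c hc hc0 hc1 f₁ f₀ hf₁ hf₀
end
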